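/- If the disturbed system is 2s-sparse δ-bounded observable, then every plausible initial state lies within distance 4δ of the true initial state x_{k−l}; that is, the union over consistent Γ of size p − s of the estimate sets 𝓛^D_Γ(U, Y^Γ) is contained in the ball B_{4δ}(x_{k−l}). -/
import Mathlib


/-- Partial measurement: restriction of the output map `c` to sensors in `Γ`. -/
def out {n p : ℕ} (c : (Fin n → ℝ) → Fin p → ℝ) (Γ : Finset (Fin p))
    (x : Fin n → ℝ) : {i // i ∈ Γ} → ℝ := fun i => c x i.1

/-- Restriction of full measurement data to sensors in `Γ`. -/
def res {p l : ℕ} (Γ : Finset (Fin p)) (y : Fin (l+1) → Fin p → ℝ) :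
    Fin (l+1) → ({i // i ∈ Γ} → ℝ) := fun j i => y j i.1

/-- `z` is a trajectory of the disturbed system `x_{k+1} = F x_k u_k + w_k`. -/
def DTraj {n m l : ℕ} (F : (Fin n → ℝ) → (Fin m → ℝ) → (Fin n → ℝ))
    (u : Fin l → (Fin m → ℝ)) (w : Fin l → (Fin n → ℝ))
    (z : Fin (l+1) → (Fin n → ℝ)) : Prop :=
  ∀ j : Fin l, z j.succ = F (z j.castSucc) (u j) + w j

/-- `(LD, xhat)` is a `δ`-bounded observability map of order `l` for the `Γ`-subsystem:
for attack-free data from any trajectory with disturbances bounded by `wbar`, the estimate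
set `LD` contains the true initial state, and every estimate set is contained in the closed
ball of radius `δ` around the center `xhat`. -/
def IsDObsMap {n m p l : ℕ} (F : (Fin n → ℝ) → (Fin m → ℝ) → (Fin n → ℝ))
    (c : (Fin n → ℝ) → Fin p → ℝ) (Γ : Finset (Fin p)) (wbar δ : ℝ)
    (LD : (Fin l → (Fin m → ℝ)) → (Fin (l+1) → ({i // i ∈ Γ} → ℝ)) → Set (Fin n → ℝ))
    (xhat : (Fin l → (Fin m → ℝ)) → (Fin (l+1) → ({i // i ∈ Γ} → ℝ)) → (Fin n → ℝ)) :
    Prop :=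
  (∀ u w z, (∀ j, ‖w j‖ ≤ wbar) → DTraj F u w z →
      z 0 ∈ LD u (fun j => out c Γ (z j))) ∧
  (∀ u Y, LD u Y ⊆ Metric.closedBall (xhat u Y) δ)

/-- The data `(u, Y)` is consistent for the disturbed `Γ`-subsystem. -/
def DConsistent {n m p l : ℕ} (F : (Fin n → ℝ) → (Fin m → ℝ) → (Fin n → ℝ))
    (c : (Fin n → ℝ) → Fin p → ℝ) (Γ : Finset (Fin p)) (wbar δ : ℝ)
    (xhat : (Fin l → (Fin m → ℝ)) → (Fin (l+1) → ({i // i ∈ Γ} → ℝ)) → (Fin n → ℝ))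
    (u : Fin l → (Fin m → ℝ)) (Y : Fin (l+1) → ({i // i ∈ Γ} → ℝ)) : Prop :=
  ∃ z : Fin (l+1) → (Fin n → ℝ), ∃ w : Fin l → (Fin n → ℝ),
    ‖z 0 - xhat u Y‖ ≤ δ ∧ (∀ j, ‖w j‖ ≤ wbar) ∧ DTraj F u w z ∧
    ∀ j, out c Γ (z j) = Y j

/-- `z0` is a plausible initial state for the disturbed system under at most `s` attacks. -/
def DPlausible {n m p l : ℕ} (F : (Fin n → ℝ) → (Fin m → ℝ) → (Fin n → ℝ))
    (c : (Fin n → ℝ) → Fin p → ℝ) (s : ℕ) (wbar : ℝ) (u : Fin l → (Fin m → ℝ))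
    (y : Fin (l+1) → Fin p → ℝ) (z0 : Fin n → ℝ) : Prop :=
  ∃ z : Fin (l+1) → (Fin n → ℝ), ∃ w : Fin l → (Fin n → ℝ),
    z 0 = z0 ∧ (∀ j, ‖w j‖ ≤ wbar) ∧ DTraj F u w z ∧
    ∃ A : Finset (Fin p), A.card ≤ s ∧ ∀ j, ∀ i ∉ A, y j i = c (z j) i

/-- under `2s`-sparse `δ`-bounded observability and at most `s` attacked
sensors, every estimate from a consistent sensor subset of cardinality `p - s` lies within
distance `4δ` of the true initial state. -/
theorem stmt10 {n m p l : ℕ} (F : (Fin n → ℝ) → (Fin m → ℝ) → (Fin n → ℝ))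
    (c : (Fin n → ℝ) → Fin p → ℝ) (s : ℕ) (wbar δ : ℝ)
    (LD : (Γ : Finset (Fin p)) →
      (Fin l → (Fin m → ℝ)) → (Fin (l+1) → ({i // i ∈ Γ} → ℝ)) → Set (Fin n → ℝ))
    (xhat : (Γ : Finset (Fin p)) →
      (Fin l → (Fin m → ℝ)) → (Fin (l+1) → ({i // i ∈ Γ} → ℝ)) → (Fin n → ℝ))
    (hLD : ∀ Γ : Finset (Fin p), p - 2*s ≤ Γ.card →
      IsDObsMap F c Γ wbar δ (LD Γ) (xhat Γ))
    (A : Finset (Fin p)) (hA : A.card ≤ s)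
    (u : Fin l → (Fin m → ℝ)) (w : Fin l → (Fin n → ℝ)) (hw : ∀ j, ‖w j‖ ≤ wbar)
    (x : Fin (l+1) → (Fin n → ℝ)) (hx : DTraj F u w x)
    (y : Fin (l+1) → Fin p → ℝ) (hy : ∀ j, ∀ i ∉ A, y j i = c (x j) i)
    (Γ : Finset (Fin p)) (hΓ : Γ.card = p - s)
    (hcons : DConsistent F c Γ wbar δ (xhat Γ) u (res Γ y)) :
    ∀ z0 ∈ LD Γ u (res Γ y), ‖z0 - x 0‖ ≤ 4 * δ := by
  intro z0 hz0
  obtain ⟨z, wz, hznear, hwz, hzTraj, hzout⟩ := hcons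
  set Γ' : Finset (Fin p) := Γ \ A with hΓ'
  have hcard : p - 2*s ≤ Γ'.card := by
    have h1 : Γ.card - A.card ≤ Γ'.card := Finset.le_card_sdiff A Γ
    have : p - 2*s ≤ Γ.card - A.card := by omega
    omega
  obtain ⟨hmem', hball'⟩ := hLD Γ' hcard
  obtain ⟨hmem, hball⟩ := hLD Γ (by omega)
  -- x 0 is in LD Γ' with its own outputs
  have hx0 : x 0 ∈ LD Γ' u (fun j => out c Γ' (x j)) := hmem' u w x hw hx
  have hz0' : z 0 ∈ LD Γ' u (fun j => out c Γ' (z j)) := hmem' u wz z hwz hzTraj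
  -- the two output data coincide with res Γ' y
  have hdata_x : (fun j => out c Γ' (x j)) = res Γ' y := by
    funext j i
    have hiΓ' : i.1 ∈ Γ' := i.2
    have hiA : i.1 ∉ A := (Finset.mem_sdiff.mp hiΓ').2
    simp only [out, res]
    exact (hy j i.1 hiA).symm
  have hdata_z : (fun j => out c Γ' (z j)) = res Γ' y := by
    funext j i
    have hiΓ : i.1 ∈ Γ := (Finset.mem_sdiff.mp i.2).1
    have := congrFun (hzout j) ⟨i.1, hiΓ⟩
    simpa [out, res] using this
  rw [hdata_x] at hx0
  rw [hdata_z] at hz0'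
  have hx0b := hball' u (res Γ' y) hx0
  have hz0b := hball' u (res Γ' y) hz0'
  have hz0ball := hball u (res Γ y) hz0
  rw [Metric.mem_closedBall] at hx0b hz0b hz0ball
  have d1 : ‖z0 - xhat Γ u (res Γ y)‖ ≤ δ := by
    simpa [dist_eq_norm] using hz0ball
  have d2 : ‖z 0 - x 0‖ ≤ 2 * δ := by
    have h1 : dist (z 0) (x 0) ≤ dist (z 0) (xhat Γ' u (res Γ' y)) +
        dist (xhat Γ' u (res Γ' y)) (x 0) := dist_triangle _ _ _
    rw [dist_comm (xhat Γ' u (res Γ' y))] at h1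
    rw [dist_eq_norm] at h1
    linarith
  calc ‖z0 - x 0‖ ≤ ‖z0 - xhat Γ u (res Γ y)‖ + ‖xhat Γ u (res Γ y) - z 0‖
        + ‖z 0 - x 0‖ := by
        have := norm_sub_le_norm_sub_add_norm_sub (z0) (xhat Γ u (res Γ y)) (x 0)
        have h2 := norm_sub_le_norm_sub_add_norm_sub (xhat Γ u (res Γ y)) (z 0) (x 0)
        linarith
    _ ≤ δ + δ + 2 * δ := by
        have : ‖xhat Γ u (res Γ y) - z 0‖ = ‖z 0 - xhat Γ u (res Γ y)‖ := norm_sub_rev _ _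
        rw [this]
        linarith
    _ = 4 * δ := by ring
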